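/- Let x and y be real numbers with y ≥ 2, and let I = (x, x+y]. Then #{n ∈ ℕ : x < n and n + t_n ≤ x + y} ≥ (number of y-smooth integers in I) − π(y). -/

import Mathlib

/-- `tn n` is the least nonnegative integer `t` such that there is a (possibly empty)
subset `S` of `{n+1, ..., n+t}` with `n * ∏_{m ∈ S} m` a perfect square. -/
noncomputable def tn (n : ℕ) : ℕ :=
  sInf {t : ℕ | ∃ S ⊆ Finset.Icc (n + 1) (n + t), IsSquare (n * ∏ m ∈ S, m)}

/-- A positive integer is `y`-smooth if all of its prime divisors are at most `y`. -/
def IsYSmooth (y : ℝ) (n : ℕ) : Prop := ∀ p : ℕ, p.Prime → p ∣ n → (p : ℝ) ≤ y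

/-- `piReal y` is the number of primes `≤ y`. -/
noncomputable def piReal (y : ℝ) : ℕ := {p : ℕ | p.Prime ∧ (p : ℝ) ≤ y}.ncard

/-!
If more than `π(y)` of the `y`-smooth integers in `I` fail to satisfy `n + t_n ∈ I`, their vectors
of prime-exponent parities, which live in `𝔽₂^{π(y)}`, are linearly dependent. So some nonempty
subset `C` of them has a square product, and for `n = min C` the rest of `C` lies in
`{n + 1, …, max C}`, whence `n + t_n ≤ max C ≤ x + y`: a contradiction.
-/

open Finset

lemma Nat.isSquare_of_even_factorization {n : ℕ} (hn : n ≠ 0)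
    (h : ∀ p, Even (n.factorization p)) : IsSquare n := by
  refine ⟨n.factorization.prod fun p k => p ^ (k / 2), ?_⟩
  rw [← Finsupp.prod_mul]
  conv_lhs => rw [← Nat.prod_factorization_pow_eq_self hn]
  refine Finsupp.prod_congr fun p _ => ?_
  obtain ⟨k, hk⟩ := h p
  rw [← pow_add, hk]
  congr 1
  omega

def parityVector (P : Finset ℕ) (n : ℕ) : P → ZMod 2 := fun p => (n.factorization p : ZMod 2)

lemma parityVector_prod (P : Finset ℕ) {S : Finset ℕ} (hS : ∀ m ∈ S, m ≠ 0) :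
    parityVector P (∏ m ∈ S, m) = ∑ m ∈ S, parityVector P m := by
  ext p
  simp [parityVector, Nat.factorization_prod hS]

lemma isSquare_of_parityVector_eq_zero {P : Finset ℕ} {n : ℕ} (hn : n ≠ 0)
    (hP : ∀ p, p.Prime → p ∣ n → p ∈ P) (h : parityVector P n = 0) : IsSquare n := by
  refine Nat.isSquare_of_even_factorization hn fun p => ?_
  by_cases hp : p ∈ P
  · exact ZMod.natCast_eq_zero_iff_even.1 (congrFun h ⟨p, hp⟩)
  · suffices n.factorization p = 0 by simp [this]
    rw [Nat.factorization_eq_zero_iff, or_iff_not_imp_left, not_not]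
    exact fun hprime => Or.inl fun hdvd => hp (hP p hprime hdvd)

lemma exists_isSquare_prod_of_card_lt {A P : Finset ℕ}
    (hA : ∀ a ∈ A, a ≠ 0 ∧ ∀ p, p.Prime → p ∣ a → p ∈ P) (hcard : P.card < A.card) :
    ∃ C ⊆ A, C.Nonempty ∧ IsSquare (∏ m ∈ C, m) := by
  have hdep : ¬ LinearIndepOn (ZMod 2) (parityVector P) (A : Set ℕ) := fun h => by
    have := h.fintype_card_le_finrank
    simp only [Finset.coe_sort_coe, Fintype.card_coe, Module.finrank_fintype_fun_eq_card] at this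
    omega
  simp only [linearIndepOn_iff', not_forall] at hdep
  obtain ⟨t, g, htA, hsum, i, hit, hgi⟩ := hdep
  set C := t.filter (g · ≠ 0)
  have hCA : C ⊆ A := (filter_subset _ _).trans (by exact_mod_cast htA)
  have hC0 : ∀ m ∈ C, m ≠ 0 := fun m hm => (hA m (hCA hm)).1
  refine ⟨C, hCA, ⟨i, mem_filter.2 ⟨hit, hgi⟩⟩, ?_⟩
  refine isSquare_of_parityVector_eq_zero (P := P) (prod_ne_zero_iff.2 hC0) (fun p hp hdvd => ?_) ?_
  · obtain ⟨m, hm, hpm⟩ := hp.prime.exists_mem_finset_dvd hdvd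
    exact (hA m (hCA hm)).2 p hp hpm
  · rw [parityVector_prod P hC0, ← hsum, sum_filter]
    refine sum_congr rfl fun m _ => ?_
    -- the only nonzero coefficient in `𝔽₂` is `1`
    rcases (by decide : ∀ a : ZMod 2, a = 0 ∨ a = 1) (g m) with h | h <;> simp [h]

lemma exists_isSquare_prod_of_piReal_lt {y : ℝ} {A : Finset ℕ}
    (hA : ∀ a ∈ A, a ≠ 0 ∧ IsYSmooth y a) (hcard : piReal y < A.card) :
    ∃ C ⊆ A, C.Nonempty ∧ IsSquare (∏ m ∈ C, m) := by
  have hfin : {p : ℕ | p.Prime ∧ (p : ℝ) ≤ y}.Finite :=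
    (Set.finite_Iic ⌊y⌋₊).subset fun p hp => Nat.le_floor hp.2
  rw [piReal, Set.ncard_eq_toFinset_card _ hfin] at hcard
  refine exists_isSquare_prod_of_card_lt (fun a ha => ⟨(hA a ha).1, fun p hp hpa => ?_⟩) hcard
  exact hfin.mem_toFinset.2 ⟨hp, (hA a ha).2 p hp hpa⟩

lemma tn_le_of_isSquare_prod {C : Finset ℕ} {n t : ℕ} (hn : n ∈ C)
    (hC : ∀ m ∈ C, n ≤ m ∧ m ≤ n + t) (hsq : IsSquare (∏ m ∈ C, m)) : tn n ≤ t := by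
  refine Nat.sInf_le ⟨C.erase n, fun m hm => ?_, by rwa [mul_prod_erase C (fun m => m) hn]⟩
  have := hC m (mem_of_mem_erase hm)
  have := ne_of_mem_erase hm
  rw [mem_Icc]
  omega

lemma finite_setOf_natCast_le (c : ℝ) : {n : ℕ | (n : ℝ) ≤ c}.Finite :=
  (Set.finite_Iic ⌊c⌋₊).subset fun _ hn => Nat.le_floor hn

lemma ncard_smooth_sdiff_le_piReal (x y : ℝ) :
    ({n : ℕ | 0 < n ∧ x < (n : ℝ) ∧ (n : ℝ) ≤ x + y ∧ IsYSmooth y n} \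
      {n : ℕ | 0 < n ∧ x < (n : ℝ) ∧ (n : ℝ) + (tn n : ℝ) ≤ x + y}).ncard ≤ piReal y := by
  set B := {n : ℕ | 0 < n ∧ x < (n : ℝ) ∧ (n : ℝ) ≤ x + y ∧ IsYSmooth y n} \
      {n : ℕ | 0 < n ∧ x < (n : ℝ) ∧ (n : ℝ) + (tn n : ℝ) ≤ x + y}
  have hB : B.Finite := (finite_setOf_natCast_le (x + y)).subset fun n hn => hn.1.2.2.1
  by_contra! hlt
  rw [Set.ncard_eq_toFinset_card _ hB] at hlt
  have hmem : ∀ {m}, m ∈ hB.toFinset ↔ m ∈ B := hB.mem_toFinset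
  obtain ⟨C, hCB, hCne, hsq⟩ := exists_isSquare_prod_of_piReal_lt
    (fun a ha => ⟨(hmem.1 ha).1.1.ne', (hmem.1 ha).1.2.2.2⟩) hlt
  set n := C.min' hCne
  set M := C.max' hCne
  obtain ⟨⟨hn0, hxn, -, -⟩, hn_bad⟩ := hmem.1 (hCB (C.min'_mem hCne))
  have hM : (M : ℝ) ≤ x + y := (hmem.1 (hCB (C.max'_mem hCne))).1.2.2.1
  have htn : tn n ≤ M - n := tn_le_of_isSquare_prod (C.min'_mem hCne)
    (fun m hm => ⟨C.min'_le m hm, by have := C.le_max' m hm; omega⟩) hsq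
  have hnM : n + tn n ≤ M := by
    have := C.min'_le_max' hCne
    omega
  exact hn_bad ⟨hn0, hxn, le_trans (by exact_mod_cast hnM) hM⟩

theorem stmt_7_general (x y : ℝ) :
    ({n : ℕ | 0 < n ∧ x < (n : ℝ) ∧ (n : ℝ) ≤ x + y ∧ IsYSmooth y n}.ncard : ℤ)
        - (piReal y : ℤ)
      ≤ ({n : ℕ | 0 < n ∧ x < (n : ℝ) ∧ (n : ℝ) + (tn n : ℝ) ≤ x + y}.ncard : ℤ) := by
  have := ncard_smooth_sdiff_le_piReal x y
  set G := {n : ℕ | 0 < n ∧ x < (n : ℝ) ∧ (n : ℝ) + (tn n : ℝ) ≤ x + y}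
  have hG : G.Finite := (finite_setOf_natCast_le (x + y)).subset fun n hn =>
    le_trans (le_add_of_nonneg_right (Nat.cast_nonneg (tn n))) hn.2.2
  have := Set.ncard_le_ncard_sdiff_add_ncard
    {n : ℕ | 0 < n ∧ x < (n : ℝ) ∧ (n : ℝ) ≤ x + y ∧ IsYSmooth y n} G hG
  omega

theorem stmt_7 (x y : ℝ) (hy : 2 ≤ y) :
    ({n : ℕ | 0 < n ∧ x < (n : ℝ) ∧ (n : ℝ) ≤ x + y ∧ IsYSmooth y n}.ncard : ℤ)
        - (piReal y : ℤ)
      ≤ ({n : ℕ | 0 < n ∧ x < (n : ℝ) ∧ (n : ℝ) + (tn n : ℝ) ≤ x + y}.ncard : ℤ) :=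
  stmt_7_general x y
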